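/- arXiv:2605.02895 — 3 statements merged into one kernel-verified Lean document; each statement's English description precedes it below -/
import Mathlib

section
/- Let F̄ be a survival function with F̄(0) = 1, F̄(t) > 0 for all t, finite mean a = ∫_0^∞ F̄(t) dt, and let μ₁ > 0, Δμ be real constants with μ₁ − Δμ F̄(T) > 0 and Δμ > 0. Define M(T) = (1/λ)(1 + (∫_0^T F̄(t) dt)/(μ₁ − Δμ F̄(T))) for λ > 0 and M(∞) = (1/λ)(1 + a/μ₁). Then for T > 0, M(T) > M(∞) if and only if m(T) < K, where m(T) = (∫_T^∞ F̄(t) dt)/F̄(T) and K = a Δμ/μ₁. -/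
open MeasureTheory Set

/-- Maintenance at time `T` is beneficial, `M(T) > M(∞)`, if and
only if `m(T) < K` where `m` is the mean residual life and `K = a Δμ/μ₁`. -/
theorem maintenance_beneficial_iff_mrl_lt_K
    (F : ℝ → ℝ) (a lam μ₁ Δμ T : ℝ)
    (hFcont : Continuous F) (hFanti : AntitoneOn F (Set.Ici 0))
    (hF0 : F 0 = 1) (hFpos : ∀ t, 0 ≤ t → 0 < F t) (hFle : ∀ t, 0 ≤ t → F t ≤ 1)
    (hInt : MeasureTheory.IntegrableOn F (Set.Ici 0))
    (ha : a = ∫ t in Set.Ioi (0:ℝ), F t)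
    (hlam : 0 < lam) (hμ₁ : 0 < μ₁) (hΔμ : 0 < Δμ) (hΔμ' : Δμ < μ₁)
    (hden : 0 < μ₁ - Δμ * F T)
    (hT : 0 < T) :
    (1 / lam) * (1 + (∫ t in (0:ℝ)..T, F t) / (μ₁ - Δμ * F T)) >
      (1 / lam) * (1 + a / μ₁) ↔
    (∫ t in Set.Ioi T, F t) / F T < a * Δμ / μ₁ := by
  have hFT : 0 < F T := hFpos T hT.le
  have hIoc : MeasureTheory.IntegrableOn F (Set.Ioc 0 T) :=
    hInt.mono_set (fun x hx => le_of_lt hx.1)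
  have hIoi : MeasureTheory.IntegrableOn F (Set.Ioi T) :=
    hInt.mono_set (fun x hx => le_trans hT.le (le_of_lt hx))
  have hsplit : a = (∫ t in (0:ℝ)..T, F t) + ∫ t in Set.Ioi T, F t := by
    rw [ha, intervalIntegral.integral_of_le hT.le,
      ← MeasureTheory.setIntegral_union (Set.Ioc_disjoint_Ioi le_rfl)
        measurableSet_Ioi hIoc hIoi, Set.Ioc_union_Ioi_eq_Ioi hT.le]
  rw [gt_iff_lt, mul_lt_mul_iff_right₀ (by positivity : (0:ℝ) < 1/lam),
    add_lt_add_iff_left, div_lt_div_iff₀ hμ₁ hden, div_lt_div_iff₀ hFT hμ₁]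
  constructor <;> intro h <;> nlinarith [hsplit, hFT, hμ₁, hΔμ]
end

section
/- Let r be a continuous hazard rate with survival function F̄(t) = exp(−∫_0^t r), and φ(t) = r(t) ∫_0^t F̄ + F̄(t). If r is increasing on an interval [s₀,∞), then φ is increasing on [s₀,∞); if r is decreasing on [0,s₀], then φ is decreasing on [0,s₀]. -/
open Set

/-!
Since `F̄' = -r F̄`, the fundamental theorem of calculus gives
`F̄ t - F̄ s = -∫_s^t r F̄`, and then for `s ≤ t`
`φ t - φ s = (r t - r s) ∫_0^s F̄ + ∫_s^t (r t - r x) F̄ x`.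
On an interval inside `[0, ∞)` on which `r` is monotone, both terms have the sign of `r t - r s`.
-/

noncomputable def hazardPhi (r F : ℝ → ℝ) (t : ℝ) : ℝ :=
  r t * (∫ x in (0 : ℝ)..t, F x) + F t

theorem hasDerivAt_exp_neg_integral {r : ℝ → ℝ} (hr : Continuous r) (t : ℝ) :
    HasDerivAt (fun u => Real.exp (-∫ x in (0 : ℝ)..u, r x))
      (-(r t * Real.exp (-∫ x in (0 : ℝ)..t, r x))) t := by
  have hG : HasDerivAt (fun u => ∫ x in (0 : ℝ)..u, r x) (r t) t :=
    intervalIntegral.integral_hasDerivAt_right (hr.intervalIntegrable 0 t)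
      (hr.stronglyMeasurableAtFilter _ _) hr.continuousAt
  simpa [mul_comm] using hG.neg.exp

section HazardPhi

variable {r F : ℝ → ℝ}

theorem hazardPhi_sub_hazardPhi (hr : Continuous r) (hF : ∀ x, HasDerivAt F (-(r x * F x)) x)
    (s t : ℝ) :
    hazardPhi r F t - hazardPhi r F s =
      (r t - r s) * (∫ x in (0 : ℝ)..s, F x) + ∫ x in s..t, (r t - r x) * F x := by
  have hFc : Continuous F := continuous_iff_continuousAt.2 fun x => (hF x).continuousAt
  have hsplit : (∫ x in (0 : ℝ)..t, F x) = (∫ x in (0 : ℝ)..s, F x) + ∫ x in s..t, F x :=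
    (intervalIntegral.integral_add_adjacent_intervals (hFc.intervalIntegrable 0 s)
      (hFc.intervalIntegrable s t)).symm
  have hftc : F t - F s = -∫ x in s..t, r x * F x := by
    rw [← intervalIntegral.integral_neg]
    exact (intervalIntegral.integral_eq_sub_of_hasDerivAt (fun x _ => hF x)
      ((hr.mul hFc).neg.intervalIntegrable s t)).symm
  have hexpand : (∫ x in s..t, (r t - r x) * F x)
      = r t * (∫ x in s..t, F x) - ∫ x in s..t, r x * F x := by
    simp only [sub_mul]
    rw [intervalIntegral.integral_sub (f := fun x => r t * F x) (g := fun x => r x * F x)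
      ((continuous_const.mul hFc).intervalIntegrable s t)
      ((hr.mul hFc).intervalIntegrable s t), intervalIntegral.integral_const_mul]
  rw [hazardPhi, hazardPhi, hsplit, hexpand]
  linear_combination hftc

variable {S : Set ℝ} [S.OrdConnected]

theorem monotoneOn_hazardPhi (hr : Continuous r) (hF : ∀ x, HasDerivAt F (-(r x * F x)) x)
    (hF₀ : ∀ x, 0 ≤ F x) (hS₀ : S ⊆ Ici 0) (hmono : MonotoneOn r S) :
    MonotoneOn (hazardPhi r F) S := by
  intro s hs t ht hst
  have hA : 0 ≤ ∫ x in (0 : ℝ)..s, F x :=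
    intervalIntegral.integral_nonneg (hS₀ hs) fun x _ => hF₀ x
  have hB : 0 ≤ ∫ x in s..t, (r t - r x) * F x :=
    intervalIntegral.integral_nonneg hst fun x hx =>
      mul_nonneg (sub_nonneg.2 (hmono (Set.Icc_subset S hs ht hx) ht hx.2)) (hF₀ x)
  have := hazardPhi_sub_hazardPhi hr hF s t
  linarith [mul_nonneg (sub_nonneg.2 (hmono hs ht hst)) hA]

theorem antitoneOn_hazardPhi (hr : Continuous r) (hF : ∀ x, HasDerivAt F (-(r x * F x)) x)
    (hF₀ : ∀ x, 0 ≤ F x) (hS₀ : S ⊆ Ici 0) (hanti : AntitoneOn r S) :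
    AntitoneOn (hazardPhi r F) S := by
  intro s hs t ht hst
  have hA : 0 ≤ ∫ x in (0 : ℝ)..s, F x :=
    intervalIntegral.integral_nonneg (hS₀ hs) fun x _ => hF₀ x
  have hB : 0 ≤ -∫ x in s..t, (r t - r x) * F x := by
    rw [← intervalIntegral.integral_neg]
    exact intervalIntegral.integral_nonneg hst fun x hx => neg_nonneg.2 <|
      mul_nonpos_of_nonpos_of_nonneg
        (sub_nonpos.2 (hanti (Set.Icc_subset S hs ht hx) ht hx.2)) (hF₀ x)
  have := hazardPhi_sub_hazardPhi hr hF s t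
  linarith [mul_nonpos_of_nonpos_of_nonneg (sub_nonpos.2 (hanti hs ht hst)) hA]

end HazardPhi

theorem phi_monotonicity_general
    (r F φ : ℝ → ℝ) (s₀ : ℝ) (hs₀ : 0 ≤ s₀)
    (hr : Continuous r)
    (hF : ∀ t, F t = Real.exp (-(∫ x in (0:ℝ)..t, r x)))
    (hφ : ∀ t, φ t = r t * (∫ x in (0:ℝ)..t, F x) + F t) :
    (MonotoneOn r (Set.Ici s₀) → MonotoneOn φ (Set.Ici s₀)) ∧
    (AntitoneOn r (Set.Icc 0 s₀) → AntitoneOn φ (Set.Icc 0 s₀)) := by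
  obtain rfl : F = fun t => Real.exp (-∫ x in (0 : ℝ)..t, r x) := funext hF
  obtain rfl : φ = hazardPhi r _ := funext hφ
  have hF' := hasDerivAt_exp_neg_integral hr
  have hF₀ : ∀ t, 0 ≤ Real.exp (-∫ x in (0 : ℝ)..t, r x) := fun t => (Real.exp_pos _).le
  exact ⟨monotoneOn_hazardPhi hr hF' hF₀ fun _ hx => hs₀.trans hx,
    antitoneOn_hazardPhi hr hF' hF₀ fun _ hx => hx.1⟩

/-- With `F̄(t) = exp(-∫_0^t r)` and
`φ(t) = r(t)∫_0^t F̄ + F̄(t)`: if `r` is increasing on `[s₀,∞)` then `φ` is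
increasing there; if `r` is decreasing on `[0,s₀]` then `φ` is decreasing
there. -/
theorem phi_monotonicity
    (r F φ : ℝ → ℝ) (s₀ : ℝ) (hs₀ : 0 ≤ s₀)
    (hr : Continuous r) (hrnn : ∀ t, 0 ≤ r t)
    (hF : ∀ t, F t = Real.exp (-(∫ x in (0:ℝ)..t, r x)))
    (hφ : ∀ t, φ t = r t * (∫ x in (0:ℝ)..t, F x) + F t) :
    (MonotoneOn r (Set.Ici s₀) → MonotoneOn φ (Set.Ici s₀)) ∧
    (AntitoneOn r (Set.Icc 0 s₀) → AntitoneOn φ (Set.Icc 0 s₀)) :=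
  phi_monotonicity_general r F φ s₀ hs₀ hr hF hφ
end

section
/- Let r be a continuous bathtub-shaped hazard rate: decreasing on [0, t_min] and strictly increasing on [t_min, ∞), with lim_{t→∞} r(t) > 1/K where K = aΔμ/μ₁ and a = ∫_0^∞ F̄ with F̄(t) = exp(−∫_0^t r). Assume μ₁ > Δμ > 0. Then φ(t) = r(t)∫_0^t F̄ + F̄(t) satisfies φ(0) = 1, φ(t_min) ≤ 1, lim_{t→∞} φ(t) > μ₁/Δμ > 1, and there exists a unique T* > t_min with φ(T*) = μ₁/Δμ. -/
/-!
Since `F̄' = -r F̄`, for all `s, t` one has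
`φ t - φ s = ∫_s^t (r t - r x) F̄ x dx + (r t - r s) ∫_0^s F̄`.
Taking `s = 0` and `t = t_min` gives `φ t_min ≤ 1` because `r` decreases on `[0, t_min]`; for
`t_min ≤ s < t` both terms are positive, so `φ` is strictly increasing on `[t_min, ∞)`. As
`∫_0^t F̄ → a` and `F̄ → 0`, `φ` tends to `a · lim r > μ₁/Δμ`, and the intermediate value theorem
produces `T*`, unique by monotonicity.
-/

open Set Filter MeasureTheory Topology

theorem Antitone.tendsto_atTop_zero_of_integrableOn {f : ℝ → ℝ} {a : ℝ} (hf : Antitone f)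
    (hf_nonneg : ∀ x, 0 ≤ f x) (hint : IntegrableOn f (Ioi a)) : Tendsto f atTop (𝓝 0) := by
  have hlim := tendsto_atTop_ciInf hf ⟨0, by rintro _ ⟨x, rfl⟩; exact hf_nonneg x⟩
  have hvol : ∀ s ∈ (atTop : Filter ℝ), volume s = ⊤ := by
    intro s hs
    obtain ⟨b, hb⟩ := mem_atTop_sets.1 hs
    rw [← top_le_iff, ← Real.volume_Ici (a := b)]
    exact measure_mono hb
  rwa [← IntegrableAtFilter.eq_zero_of_tendsto ⟨Ioi a, Ioi_mem_atTop a, hint⟩ hvol hlim]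

theorem StrictMonoOn.existsUnique_gt_eq {α β : Type*} [ConditionallyCompleteLinearOrder α]
    [TopologicalSpace α] [OrderTopology α] [DenselyOrdered α] [LinearOrder β] [TopologicalSpace β]
    [OrderClosedTopology β] {f : α → β} {a : α} {c : β} (hcont : ContinuousOn f (Ici a))
    (hmono : StrictMonoOn f (Ici a)) (ha : f a < c) (hc : ∀ᶠ t in atTop, c < f t) :
    ∃! T, a < T ∧ f T = c := by
  obtain ⟨b, hcb, hab⟩ := (hc.and (eventually_ge_atTop a)).exists
  obtain ⟨T, hT, rfl⟩ := intermediate_value_Icc hab (hcont.mono Icc_subset_Ici_self) ⟨ha.le, hcb.le⟩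
  have haT : a < T := hT.1.lt_of_ne (by rintro rfl; exact ha.false)
  refine ⟨T, ⟨haT, rfl⟩, fun T' hT' => ?_⟩
  exact hmono.injOn (mem_Ici.2 hT'.1.le) (mem_Ici.2 haT.le) hT'.2

namespace Hazard

noncomputable def survival (r : ℝ → ℝ) (t : ℝ) : ℝ := Real.exp (-∫ x in (0 : ℝ)..t, r x)

noncomputable def phi (r : ℝ → ℝ) (t : ℝ) : ℝ :=
  r t * (∫ x in (0 : ℝ)..t, survival r x) + survival r t

theorem survival_pos (r : ℝ → ℝ) (t : ℝ) : 0 < survival r t := Real.exp_pos _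

@[simp] theorem survival_zero (r : ℝ → ℝ) : survival r 0 = 1 := by simp [survival]

@[simp] theorem phi_zero (r : ℝ → ℝ) : phi r 0 = 1 := by simp [phi]

variable {r : ℝ → ℝ}

theorem hasDerivAt_survival (hr : Continuous r) (t : ℝ) :
    HasDerivAt (survival r) (-(r t * survival r t)) t := by
  have hprim := intervalIntegral.integral_hasDerivAt_right (hr.intervalIntegrable 0 t)
    (hr.stronglyMeasurableAtFilter _ _) hr.continuousAt
  have hderiv : -(r t * survival r t) = Real.exp (-∫ x in (0 : ℝ)..t, r x) * -r t := by
    rw [survival]; ring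
  exact hderiv ▸ (Real.hasDerivAt_exp _).comp t hprim.neg

theorem continuous_survival (hr : Continuous r) : Continuous (survival r) :=
  continuous_iff_continuousAt.2 fun t => (hasDerivAt_survival hr t).continuousAt

theorem integral_mul_survival (hr : Continuous r) (s t : ℝ) :
    ∫ x in s..t, r x * survival r x = survival r s - survival r t := by
  rw [intervalIntegral.integral_eq_sub_of_hasDerivAt (f := -survival r)
    (f' := fun x => r x * survival r x)
    (fun x _ => by simpa using (hasDerivAt_survival hr x).neg)
    ((hr.mul (continuous_survival hr)).intervalIntegrable s t), Pi.neg_apply, Pi.neg_apply]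
  ring

theorem antitone_survival (hr : Continuous r) (hr_nonneg : ∀ t, 0 ≤ r t) :
    Antitone (survival r) := fun s t hst => by
  have := intervalIntegral.integral_nonneg (μ := volume) hst
    fun x _ => mul_nonneg (hr_nonneg x) (survival_pos r x).le
  rw [integral_mul_survival hr] at this
  linarith

theorem integral_survival_pos (hint : IntegrableOn (survival r) (Ioi 0)) :
    0 < ∫ t in Ioi 0, survival r t := by
  rw [setIntegral_pos_iff_support_of_nonneg_ae
    (ae_of_all _ fun t => (survival_pos r t).le) hint]
  simp [Function.support_eq_univ fun t => (survival_pos r t).ne']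

theorem phi_sub_phi (hr : Continuous r) (s t : ℝ) :
    phi r t - phi r s = (∫ x in s..t, (r t - r x) * survival r x) +
      (r t - r s) * ∫ x in (0 : ℝ)..s, survival r x := by
  have hF := continuous_survival hr
  have hsplit : ∫ x in s..t, (r t - r x) * survival r x =
      r t * (∫ x in s..t, survival r x) - ∫ x in s..t, r x * survival r x := by
    simp_rw [sub_mul]
    rw [intervalIntegral.integral_sub (f := fun x => r t * survival r x)
      (g := fun x => r x * survival r x) ((continuous_const.mul hF).intervalIntegrable s t)
      ((hr.mul hF).intervalIntegrable s t), intervalIntegral.integral_const_mul]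
  rw [phi, phi, hsplit, integral_mul_survival hr, ← intervalIntegral.integral_add_adjacent_intervals
    (hF.intervalIntegrable 0 s) (hF.intervalIntegrable s t)]
  ring

theorem phi_le_one_of_antitoneOn {t : ℝ} (hr : Continuous r) (ht : 0 ≤ t)
    (hanti : AntitoneOn r (Icc 0 t)) : phi r t ≤ 1 := by
  have hle : ∫ x in (0 : ℝ)..t, (r t - r x) * survival r x ≤ 0 := by
    rw [intervalIntegral.integral_of_le ht]
    exact setIntegral_nonpos measurableSet_Ioc fun x hx =>
      mul_nonpos_of_nonpos_of_nonneg
        (sub_nonpos.2 (hanti (Ioc_subset_Icc_self hx) ⟨ht, le_rfl⟩ hx.2)) (survival_pos r x).le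
  have := phi_sub_phi hr 0 t
  simp only [phi_zero, intervalIntegral.integral_same, mul_zero, add_zero] at this
  linarith

theorem strictMonoOn_phi {t₀ : ℝ} (hr : Continuous r) (ht₀ : 0 ≤ t₀)
    (hinc : StrictMonoOn r (Ici t₀)) : StrictMonoOn (phi r) (Ici t₀) := by
  intro s hs t ht hst
  have hmid : 0 < ∫ x in s..t, (r t - r x) * survival r x :=
    intervalIntegral.intervalIntegral_pos_of_pos_on
      (((continuous_const.sub hr).mul (continuous_survival hr)).intervalIntegrable s t)
      (fun x hx => mul_pos (sub_pos.2 (hinc (le_trans hs hx.1.le) ht hx.2)) (survival_pos r x))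
      hst
  have hhead : 0 ≤ (r t - r s) * ∫ x in (0 : ℝ)..s, survival r x :=
    mul_nonneg (sub_nonneg.2 (hinc hs ht hst).le)
      (intervalIntegral.integral_nonneg (ht₀.trans hs) fun x _ => (survival_pos r x).le)
  linarith [phi_sub_phi hr s t]

theorem continuous_phi (hr : Continuous r) : Continuous (phi r) :=
  (hr.mul (intervalIntegral.continuous_primitive
    (fun s t => (continuous_survival hr).intervalIntegrable s t) 0)).add (continuous_survival hr)

theorem tendsto_integral_survival (hint : IntegrableOn (survival r) (Ioi 0)) :
    Tendsto (fun t => ∫ x in (0 : ℝ)..t, survival r x) atTop (𝓝 (∫ t in Ioi 0, survival r t)) :=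
  intervalIntegral_tendsto_integral_Ioi 0 hint tendsto_id

theorem tendsto_phi_atTop_atTop (hint : IntegrableOn (survival r) (Ioi 0))
    (hlim : Tendsto r atTop atTop) : Tendsto (phi r) atTop atTop :=
  (hlim.atTop_mul_pos (integral_survival_pos hint) (tendsto_integral_survival hint)).atTop_add_nonneg
    fun t => (survival_pos r t).le

theorem tendsto_phi_nhds {L : ℝ} (hr : Continuous r) (hr_nonneg : ∀ t, 0 ≤ r t)
    (hint : IntegrableOn (survival r) (Ioi 0)) (hlim : Tendsto r atTop (𝓝 L)) :
    Tendsto (phi r) atTop (𝓝 (L * ∫ t in Ioi 0, survival r t)) := by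
  rw [← add_zero (L * _)]
  exact (hlim.mul (tendsto_integral_survival hint)).add
    ((antitone_survival hr hr_nonneg).tendsto_atTop_zero_of_integrableOn
      (fun t => (survival_pos r t).le) hint)

end Hazard

open Hazard

theorem optimal_time_existence_BFR_general
    (r F φ : ℝ → ℝ) (tmin a μ₁ Δμ K : ℝ)
    (htmin : 0 ≤ tmin)
    (hrcont : Continuous r) (hrnn : ∀ t, 0 ≤ r t)
    (hrdec : AntitoneOn r (Set.Icc 0 tmin))
    (hrinc : StrictMonoOn r (Set.Ici tmin))
    (hF : ∀ t, F t = Real.exp (-(∫ x in (0:ℝ)..t, r x)))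
    (hInt : MeasureTheory.IntegrableOn F (Set.Ici 0))
    (ha : a = ∫ t in Set.Ioi (0:ℝ), F t)
    (hΔμ : 0 < Δμ) (hΔμ' : Δμ < μ₁)
    (hK : K = a * Δμ / μ₁)
    (hrlim : Filter.Tendsto r Filter.atTop Filter.atTop ∨
      ∃ L : ℝ, Filter.Tendsto r Filter.atTop (nhds L) ∧ 1 / K < L)
    (hφ : ∀ t, φ t = r t * (∫ x in (0:ℝ)..t, F x) + F t) :
    φ 0 = 1 ∧ φ tmin ≤ 1 ∧
    (Filter.Tendsto φ Filter.atTop Filter.atTop ∨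
      ∃ L : ℝ, Filter.Tendsto φ Filter.atTop (nhds L) ∧ μ₁ / Δμ < L) ∧
    1 < μ₁ / Δμ ∧
    ∃! T : ℝ, tmin < T ∧ φ T = μ₁ / Δμ := by
  obtain rfl : F = survival r := funext hF
  obtain rfl : φ = phi r := funext hφ
  have hint : IntegrableOn (survival r) (Ioi 0) := hInt.mono_set Ioi_subset_Ici_self
  have ha_pos : 0 < a := ha ▸ integral_survival_pos hint
  have hratio : 1 < μ₁ / Δμ := (one_lt_div hΔμ).2 hΔμ'
  have hφtmin : phi r tmin ≤ 1 := phi_le_one_of_antitoneOn hrcont htmin hrdec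
  have hφlim : Tendsto (phi r) atTop atTop ∨
      ∃ L, Tendsto (phi r) atTop (𝓝 L) ∧ μ₁ / Δμ < L := by
    rcases hrlim with hlim | ⟨L, hlim, hLK⟩
    · exact .inl (tendsto_phi_atTop_atTop hint hlim)
    · refine .inr ⟨L * a, ha ▸ tendsto_phi_nhds hrcont hrnn hint hlim, ?_⟩
      rw [hK, one_div_div, div_lt_iff₀ (by positivity)] at hLK
      rw [div_lt_iff₀ hΔμ]
      linarith
  have hφ_gt : ∀ᶠ t in atTop, μ₁ / Δμ < phi r t := by
    rcases hφlim with hlim | ⟨L, hlim, hL⟩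
    exacts [hlim.eventually_gt_atTop _, hlim.eventually (eventually_gt_nhds hL)]
  exact ⟨phi_zero r, hφtmin, hφlim, hratio,
    (strictMonoOn_phi hrcont htmin hrinc).existsUnique_gt_eq
      (continuous_phi hrcont).continuousOn (hφtmin.trans_lt hratio) hφ_gt⟩

/-- For a bathtub-shaped hazard rate `r` (decreasing on
`[0,t_min]`, strictly increasing on `[t_min,∞)`) with
`lim_{t→∞} r(t) > 1/K`, `K = aΔμ/μ₁`, `μ₁ > Δμ > 0`: the function
`φ(t) = r(t)∫_0^t F̄ + F̄(t)` satisfies `φ(0) = 1`, `φ(t_min) ≤ 1`,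
`lim_{t→∞} φ(t) > μ₁/Δμ > 1`, and there is a unique `T* > t_min` with
`φ(T*) = μ₁/Δμ`. -/
theorem optimal_time_existence_BFR
    (r F φ : ℝ → ℝ) (tmin a μ₁ Δμ K : ℝ)
    (htmin : 0 ≤ tmin)
    (hrcont : Continuous r) (hrnn : ∀ t, 0 ≤ r t)
    (hrdec : AntitoneOn r (Set.Icc 0 tmin))
    (hrinc : StrictMonoOn r (Set.Ici tmin))
    (hF : ∀ t, F t = Real.exp (-(∫ x in (0:ℝ)..t, r x)))
    (hInt : MeasureTheory.IntegrableOn F (Set.Ici 0))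
    (ha : a = ∫ t in Set.Ioi (0:ℝ), F t)
    (hμ₁ : 0 < μ₁) (hΔμ : 0 < Δμ) (hΔμ' : Δμ < μ₁)
    (hK : K = a * Δμ / μ₁)
    (hrlim : Filter.Tendsto r Filter.atTop Filter.atTop ∨
      ∃ L : ℝ, Filter.Tendsto r Filter.atTop (nhds L) ∧ 1 / K < L)
    (hφ : ∀ t, φ t = r t * (∫ x in (0:ℝ)..t, F x) + F t) :
    φ 0 = 1 ∧ φ tmin ≤ 1 ∧
    (Filter.Tendsto φ Filter.atTop Filter.atTop ∨
      ∃ L : ℝ, Filter.Tendsto φ Filter.atTop (nhds L) ∧ μ₁ / Δμ < L) ∧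
    1 < μ₁ / Δμ ∧
    ∃! T : ℝ, tmin < T ∧ φ T = μ₁ / Δμ :=
  optimal_time_existence_BFR_general r F φ tmin a μ₁ Δμ K htmin hrcont hrnn hrdec hrinc hF hInt ha
    hΔμ hΔμ' hK hrlim hφ
end
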